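/- Let n be a positive integer, and let ρ, j, λ, δ ∈ ℝ with λ ≠ 0 and nj ≠ 1. Suppose u : (0,∞) × ℝ → ℝ is C³ and satisfies u_t + uⁿ u_x + (j/t) u + λ t^(ρ(1−nj)−nj) u_{xxx} = 0 for all t > 0 and x ∈ ℝ. Then the function v(t,x) = e^((ρ−2−3nj/(1−nj))δ) u( e^(−3nδ/(1−nj)) t, e^(−n(ρ+1)δ) x ) also satisfies v_t + vⁿ v_x + (j/t) v + λ t^(ρ(1−nj)−nj) v_{xxx} = 0 for all t > 0 and x ∈ ℝ. -/

import Mathlib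

/-- Partial derivative in `t` of `u = u(t,x)`. -/
noncomputable def pt (u : ℝ → ℝ → ℝ) (t x : ℝ) : ℝ := deriv (fun s => u s x) t
/-- Partial derivative in `x` of `u = u(t,x)`. -/
noncomputable def px (u : ℝ → ℝ → ℝ) (t x : ℝ) : ℝ := deriv (fun y => u t y) x
/-- Third partial derivative in `x` of `u = u(t,x)`. -/
noncomputable def pxxx (u : ℝ → ℝ → ℝ) (t x : ℝ) : ℝ := iteratedDeriv 3 (fun y => u t y) x

/-! Under `u ↦ c u(a t, b x)` the four terms of the operator pick up the factors `c a`, `cⁿ⁺¹ b`,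
`c a` and `c b³ a^(-σ)` (the last two after rewriting `t` as `a t / a`). The generator's
exponentials satisfy `cⁿ b = a` and `b³ = a^(1+σ)`, so the whole operator is multiplied by
`c a` and its zeros are preserved. -/

open Real

-- Unlike `iteratedDeriv_comp_const_mul`, no smoothness is needed: where `f` is not
-- differentiable, both sides of `deriv_comp_mul_left` are `0`.
theorem iteratedDeriv_comp_mul_left {𝕜 F : Type*} [NontriviallyNormedField 𝕜]
    [NormedAddCommGroup F] [NormedSpace 𝕜 F] (k : ℕ) (f : 𝕜 → F) (c x : 𝕜) :
    iteratedDeriv k (fun y => f (c * y)) x = c ^ k • iteratedDeriv k f (c * x) := by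
  induction k generalizing f with
  | zero => simp
  | succ k ih =>
    have hderiv : deriv (fun y => f (c * y)) = c • fun y => deriv f (c * y) :=
      funext (deriv_comp_mul_left c f)
    rw [iteratedDeriv_succ', iteratedDeriv_succ', hderiv, iteratedDeriv_const_smul_field, ih,
      smul_smul, pow_succ']

section Scaling

variable (u : ℝ → ℝ → ℝ) (a b c t x : ℝ)

theorem pt_scale : pt (fun t x => c * u (a * t) (b * x)) t x = c * a * pt u (a * t) (b * x) := by
  simp only [pt]
  rw [deriv_const_mul_field, deriv_comp_mul_left a (fun s => u s (b * x)), smul_eq_mul, mul_assoc]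

theorem px_scale : px (fun t x => c * u (a * t) (b * x)) t x = c * b * px u (a * t) (b * x) := by
  simp only [px]
  rw [deriv_const_mul_field, deriv_comp_mul_left b (u (a * t)), smul_eq_mul, mul_assoc]

theorem pxxx_scale :
    pxxx (fun t x => c * u (a * t) (b * x)) t x = c * b ^ 3 * pxxx u (a * t) (b * x) := by
  simp only [pxxx]
  rw [iteratedDeriv_const_mul_field, iteratedDeriv_comp_mul_left 3 (u (a * t)), smul_eq_mul,
    mul_assoc]

end Scaling

noncomputable def dampedKdV (n : ℕ) (j lam σ : ℝ) (u : ℝ → ℝ → ℝ) (t x : ℝ) : ℝ :=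
  pt u t x + u t x ^ n * px u t x + j / t * u t x + lam * t ^ σ * pxxx u t x

theorem dampedKdV_scale (n : ℕ) (j lam σ : ℝ) (u : ℝ → ℝ → ℝ) {a : ℝ} (ha : 0 < a) (b c : ℝ)
    (hcb : c ^ n * b = a) (hba : b ^ 3 = a * a ^ σ) {t : ℝ} (ht : 0 ≤ t) (x : ℝ) :
    dampedKdV n j lam σ (fun t x => c * u (a * t) (b * x)) t x
      = c * a * dampedKdV n j lam σ u (a * t) (b * x) := by
  have hj : j / t = a * (j / (a * t)) := by
    rw [mul_div_assoc', mul_div_mul_left _ _ ha.ne']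
  simp only [dampedKdV]
  rw [pt_scale, px_scale, pxxx_scale, hba, mul_rpow ha.le ht, hj, mul_pow, ← hcb]
  ring

theorem stmt_18_general (n : ℕ) (ρ j lam δ : ℝ)
    (hnj : (n:ℝ) * j ≠ 1)
    (u : ℝ → ℝ → ℝ)
    (hpde : ∀ t, 0 < t → ∀ x : ℝ,
      pt u t x + (u t x) ^ n * px u t x + j / t * u t x
        + lam * t ^ (ρ * (1 - (n:ℝ) * j) - (n:ℝ) * j) * pxxx u t x = 0)
    (v : ℝ → ℝ → ℝ)
    (hv : ∀ t x, v t x = Real.exp ((ρ - 2 - 3 * (n:ℝ) * j / (1 - (n:ℝ) * j)) * δ)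
      * u (Real.exp (-3 * (n:ℝ) * δ / (1 - (n:ℝ) * j)) * t)
          (Real.exp (-(n:ℝ) * (ρ + 1) * δ) * x)) :
    ∀ t, 0 < t → ∀ x : ℝ,
      pt v t x + (v t x) ^ n * px v t x + j / t * v t x
        + lam * t ^ (ρ * (1 - (n:ℝ) * j) - (n:ℝ) * j) * pxxx v t x = 0 := by
  intro t ht x
  have hden : 1 - (n:ℝ) * j ≠ 0 := sub_ne_zero.mpr hnj.symm
  have hcb : exp ((ρ - 2 - 3 * n * j / (1 - n * j)) * δ) ^ n * exp (-n * (ρ + 1) * δ)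
      = exp (-3 * n * δ / (1 - n * j)) := by
    rw [← exp_nat_mul, ← exp_add, exp_eq_exp]
    field_simp
    ring
  have hba : exp (-n * (ρ + 1) * δ) ^ 3 = exp (-3 * n * δ / (1 - n * j))
      * exp (-3 * n * δ / (1 - n * j)) ^ (ρ * (1 - n * j) - n * j) := by
    rw [← exp_nat_mul, ← exp_mul, ← exp_add, exp_eq_exp]
    field_simp
    ring
  obtain rfl : v = fun t x => _ * u (_ * t) (_ * x) := funext₂ hv
  change dampedKdV n j lam _ _ t x = 0
  rw [dampedKdV_scale n j lam _ u (exp_pos _) _ _ hcb hba ht.le]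
  exact mul_eq_zero_of_right _ (hpde _ (mul_pos (exp_pos _) ht) _)

/-- The one-parameter Lie symmetry group generated by
`Γ = (3n/(1−nj)) t∂_t + n(ρ+1) x∂_x + (ρ−2−3nj/(1−nj)) u∂_u` maps solutions of the damped
generalized KdV equation `u_t + uⁿ u_x + (j/t) u + λ t^{ρ(1−nj)−nj} u_{xxx} = 0`
(for `t > 0`) to solutions. -/
theorem stmt_18 (n : ℕ) (hn : 0 < n) (ρ j lam δ : ℝ) (hlam : lam ≠ 0)
    (hnj : (n:ℝ) * j ≠ 1)
    (u : ℝ → ℝ → ℝ)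
    (hu : ContDiffOn ℝ 3 (fun p : ℝ × ℝ => u p.1 p.2) {p : ℝ × ℝ | 0 < p.1})
    (hpde : ∀ t, 0 < t → ∀ x : ℝ,
      pt u t x + (u t x) ^ n * px u t x + j / t * u t x
        + lam * t ^ (ρ * (1 - (n:ℝ) * j) - (n:ℝ) * j) * pxxx u t x = 0)
    (v : ℝ → ℝ → ℝ)
    (hv : ∀ t x, v t x = Real.exp ((ρ - 2 - 3 * (n:ℝ) * j / (1 - (n:ℝ) * j)) * δ)
      * u (Real.exp (-3 * (n:ℝ) * δ / (1 - (n:ℝ) * j)) * t)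
          (Real.exp (-(n:ℝ) * (ρ + 1) * δ) * x)) :
    ∀ t, 0 < t → ∀ x : ℝ,
      pt v t x + (v t x) ^ n * px v t x + j / t * v t x
        + lam * t ^ (ρ * (1 - (n:ℝ) * j) - (n:ℝ) * j) * pxxx v t x = 0 :=
  stmt_18_general n ρ j lam δ hnj u hpde v hv
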